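/- arXiv:2311.16271 — 4 statements merged into one kernel-verified Lean document; each statement's English description precedes it below -/
import Mathlib

section
/- Let X and H be real Hilbert spaces, let ι : X → H be a compact continuous linear map with ‖ι u‖_H ≤ ‖u‖_X for all u ∈ X, and let Q : H → H be a continuous linear map with operator norm at most 1. Define f : X → ℝ by f(u) = (1/2)‖u‖_X² − ‖Q(ι u)‖_H. Then: (i) f is coercive, i.e. f(u)/‖u‖_X → +∞ as ‖u‖_X → +∞ (indeed f(u) ≥ (1/2)‖u‖_X² − ‖u‖_X for all u); and (ii) f is sequentially weakly lower semicontinuous, i.e. for every sequence (u_k) in X and u ∈ X such that ⟨u_k, v⟩_X → ⟨u, v⟩_X for all v ∈ X, one has f(u) ≤ liminf_{k→∞} f(u_k). -/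
set_option maxHeartbeats 1000000

open scoped RealInnerProductSpace
open Filter
open scoped Pointwise

/-- A compact operator maps weakly convergent sequences to strongly convergent ones. -/
lemma weak_to_strong_aux {X H : Type*}
    [NormedAddCommGroup X] [InnerProductSpace ℝ X] [CompleteSpace X]
    [NormedAddCommGroup H] [InnerProductSpace ℝ H] [CompleteSpace H]
    (ι : X →L[ℝ] H) (hcomp : IsCompactOperator ι)
    (u : ℕ → X) (u₀ : X)
    (hw : ∀ v : X, Tendsto (fun k => ⟪u k, v⟫) atTop (nhds ⟪u₀, v⟫)) :
    Tendsto (fun k => ι (u k)) atTop (nhds (ι u₀)) := by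
  -- boundedness via Banach–Steinhaus
  obtain ⟨C, hC⟩ : ∃ C, ∀ k, ‖(innerSL ℝ) (u k)‖ ≤ C := by
    apply banach_steinhaus
    intro v
    have : Bornology.IsBounded (Set.range fun k => ⟪u k, v⟫) :=
      Metric.isBounded_range_of_tendsto _ (hw v)
    obtain ⟨C, hC⟩ := this.exists_norm_le
    exact ⟨C, fun k => hC _ ⟨k, rfl⟩⟩
  have hCb : ∀ k, ‖u k‖ ≤ C := by
    intro k; simpa [innerSL_apply_norm] using hC k
  have hC0 : 0 ≤ C := le_trans (norm_nonneg _) (hCb 0)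
  -- a compact set containing all ι (u k)
  obtain ⟨K, hK, hKmem⟩ := hcomp
  obtain ⟨r, hr, hball⟩ := Metric.mem_nhds_iff.1 hKmem
  set c : ℝ := r / (2 * (C + 1)) with hc
  have hc0 : 0 < c := by positivity
  have hmemK : ∀ k, ι (u k) ∈ c⁻¹ • K := by
    intro k
    have h1 : c • u k ∈ Metric.ball (0 : X) r := by
      rw [Metric.mem_ball, dist_zero_right, norm_smul]
      have : ‖c‖ = c := abs_of_pos hc0
      rw [this]
      have : c * ‖u k‖ ≤ c * C := by
        apply mul_le_mul_of_nonneg_left (hCb k) hc0.le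
      calc c * ‖u k‖ ≤ c * C := this
        _ < r := by
          rw [hc]
          rw [div_mul_eq_mul_div, mul_comm]
          rw [div_lt_iff₀ (by positivity)]
          nlinarith
    have h2 : ι (c • u k) ∈ K := hball h1
    have h3 : ι (c • u k) = c • ι (u k) := by simp
    refine ⟨c • ι (u k), by rwa [← h3], ?_⟩
    show c⁻¹ • (c • ι (u k)) = ι (u k)
    rw [smul_smul, inv_mul_cancel₀ hc0.ne', one_smul]
  have hKc : IsCompact (c⁻¹ • K) := hK.smul c⁻¹
  -- weak convergence of images
  have hwH : ∀ w : H, Tendsto (fun k => ⟪ι (u k), w⟫) atTop (nhds ⟪ι u₀, w⟫) := by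
    intro w
    have := hw (ContinuousLinearMap.adjoint ι w)
    simpa only [ContinuousLinearMap.adjoint_inner_right] using this
  -- subsequence argument
  apply tendsto_of_subseq_tendsto
  intro ns hns
  obtain ⟨y, hyK, φ, hφ, hφt⟩ := hKc.tendsto_subseq (x := fun n => ι (u (ns n)))
    (fun n => hmemK (ns n))
  refine ⟨φ, ?_⟩
  have hy : y = ι u₀ := by
    apply ext_inner_right ℝ
    intro w
    have h1 : Tendsto (fun n => ⟪ι (u (ns (φ n))), w⟫) atTop (nhds ⟪y, w⟫) :=
      hφt.inner tendsto_const_nhds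
    have h2 : Tendsto (fun n => ⟪ι (u (ns (φ n))), w⟫) atTop (nhds ⟪ι u₀, w⟫) :=
      (hwH w).comp ((hns.comp hφ.tendsto_atTop))
    exact tendsto_nhds_unique h1 h2
  rwa [hy] at hφt

/-- For real Hilbert spaces `X, H`, a compact continuous linear map
`ι : X → H` with `‖ι u‖ ≤ ‖u‖`, and a continuous linear map `Q : H → H` with `‖Q‖ ≤ 1`,
the functional `f(u) = (1/2)‖u‖² − ‖Q(ι u)‖` satisfies `f(u) ≥ (1/2)‖u‖² − ‖u‖`
(hence is coercive: `f(u)/‖u‖ → +∞` as `‖u‖ → +∞`) and is sequentially weakly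
lower semicontinuous. -/
theorem stmt_9 {X H : Type*}
    [NormedAddCommGroup X] [InnerProductSpace ℝ X] [CompleteSpace X]
    [NormedAddCommGroup H] [InnerProductSpace ℝ H] [CompleteSpace H]
    (ι : X →L[ℝ] H) (hcomp : IsCompactOperator ι) (hle : ∀ u : X, ‖ι u‖ ≤ ‖u‖)
    (Q : H →L[ℝ] H) (hQ : ‖Q‖ ≤ 1)
    (f : X → ℝ) (hf : ∀ u : X, f u = (1 / 2) * ‖u‖ ^ 2 - ‖Q (ι u)‖) :
    (∀ u : X, (1 / 2) * ‖u‖ ^ 2 - ‖u‖ ≤ f u) ∧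
      Tendsto (fun u : X => f u / ‖u‖) (Filter.comap (fun u : X => ‖u‖) atTop) atTop ∧
      (∀ (u : ℕ → X) (u₀ : X),
        (∀ v : X, Tendsto (fun k => ⟪u k, v⟫) atTop (nhds ⟪u₀, v⟫)) →
        f u₀ ≤ liminf (fun k => f (u k)) atTop) := by
  have hbound : ∀ u : X, ‖Q (ι u)‖ ≤ ‖u‖ := by
    intro u
    calc ‖Q (ι u)‖ ≤ ‖Q‖ * ‖ι u‖ := Q.le_opNorm _
      _ ≤ 1 * ‖u‖ := by
          apply mul_le_mul hQ (hle u) (norm_nonneg _) zero_le_one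
      _ = ‖u‖ := one_mul _
  have h1 : ∀ u : X, (1 / 2) * ‖u‖ ^ 2 - ‖u‖ ≤ f u := by
    intro u; rw [hf]; linarith [hbound u]
  refine ⟨h1, ?_, ?_⟩
  · -- coercivity
    have hn : Tendsto (fun u : X => ‖u‖) (Filter.comap (fun u : X => ‖u‖) atTop) atTop :=
      tendsto_comap
    have hg : Tendsto (fun u : X => ‖u‖ / 2 - 1)
        (Filter.comap (fun u : X => ‖u‖) atTop) atTop :=
      tendsto_atTop_add_const_right _ (-1) (hn.atTop_div_const two_pos) |>.congr
        (fun u => by ring)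
    apply tendsto_atTop_mono' _ _ hg
    filter_upwards [hn.eventually (eventually_ge_atTop 1)] with u hu
    have hu0 : (0 : ℝ) < ‖u‖ := lt_of_lt_of_le one_pos hu
    rw [le_div_iff₀ hu0]
    have := h1 u
    nlinarith [hbound u, sq_nonneg (‖u‖ - 1)]
  · -- weak lsc
    intro u u₀ hw
    -- boundedness (for coboundedness of liminf)
    obtain ⟨C, hC⟩ : ∃ C, ∀ k, ‖(innerSL ℝ) (u k)‖ ≤ C := by
      apply banach_steinhaus
      intro v
      have : Bornology.IsBounded (Set.range fun k => ⟪u k, v⟫) :=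
        Metric.isBounded_range_of_tendsto _ (hw v)
      obtain ⟨C, hC⟩ := this.exists_norm_le
      exact ⟨C, fun k => hC _ ⟨k, rfl⟩⟩
    have hCb : ∀ k, ‖u k‖ ≤ C := by
      intro k; simpa [innerSL_apply_norm] using hC k
    have hstrong := weak_to_strong_aux ι hcomp u u₀ hw
    have hQt : Tendsto (fun k => ‖Q (ι (u k))‖) atTop (nhds ‖Q (ι u₀)‖) := by
      apply Filter.Tendsto.norm
      exact (Q.continuous.tendsto (ι u₀)).comp hstrong
    have hcobdd : IsBoundedUnder (· ≤ ·) atTop (fun k => f (u k)) := by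
      apply isBoundedUnder_of
      refine ⟨(1 / 2) * C ^ 2, fun k => ?_⟩
      rw [hf]
      have h2 : ‖u k‖ ^ 2 ≤ C ^ 2 := by
        apply sq_le_sq' _ (hCb k); linarith [norm_nonneg (u k), hCb k]
      linarith [norm_nonneg (Q (ι (u k)))]
    have key : ∀ ε : ℝ, 0 < ε → f u₀ - ε ≤ liminf (fun k => f (u k)) atTop := by
      intro ε hε
      apply le_liminf_of_le hcobdd.isCoboundedUnder_ge
      have hA : ∀ᶠ k in atTop, ‖Q (ι (u k))‖ ≤ ‖Q (ι u₀)‖ + ε / 2 := by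
        filter_upwards [hQt.eventually (eventually_le_nhds (show ‖Q (ι u₀)‖ < ‖Q (ι u₀)‖ + ε / 2 by linarith))] with k hk
        exact hk
      have hB : ∀ᶠ k in atTop, ‖u₀‖ ^ 2 - ε / 2 ≤ ⟪u k, u₀⟫ := by
        have h0 : ⟪u₀, u₀⟫ = ‖u₀‖ ^ 2 := real_inner_self_eq_norm_sq u₀
        filter_upwards [(hw u₀).eventually (eventually_ge_nhds (show ‖u₀‖ ^ 2 - ε / 2 < ⟪u₀, u₀⟫ by rw [h0]; linarith))]
          with k hk
        exact hk
      filter_upwards [hA, hB] with k hA hB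
      rw [hf, hf]
      have hkey : ⟪u k, u₀⟫ ≤ (1 / 2) * ‖u k‖ ^ 2 + (1 / 2) * ‖u₀‖ ^ 2 := by
        nlinarith [norm_sub_sq_real (u k) u₀, sq_nonneg (‖u k - u₀‖), real_inner_self_eq_norm_sq (u k - u₀)]
      linarith
    by_contra h
    push_neg at h
    have : f u₀ - (f u₀ - liminf (fun k => f (u k)) atTop) / 2 ≤ liminf (fun k => f (u k)) atTop :=
      key _ (by linarith)
    linarith
end

section
/- Let X and H be real Hilbert spaces and let ι : X → H be an injective compact continuous linear map. Let M ∈ ℕ and let e_1, …, e_M ∈ X be such that ⟨ι e_i, ι e_j⟩_H = δ_{ij} for all 1 ≤ i,j ≤ M. Define P : H → H by P h = Σ_{i=1}^M ⟨h, ι e_i⟩_H ι e_i and f : X → ℝ by f(u) = (1/2)‖u‖_X² − ‖ι u − P(ι u)‖_H. Suppose û ∈ X satisfies û ≠ 0, ⟨ι û, ι e_i⟩_H = 0 for all i = 1,…,M, and û is a critical point of f, i.e. lim_{t→0} (f(û + t v) − f(û))/t = 0 for every v ∈ X. Then ⟨û, v⟩_X = ‖ι û‖_H^{-1} ⟨ι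 û, ι v⟩_H for all v ∈ X; that is, û is an eigenvector of the variational eigenvalue problem ⟨u, v⟩_X = μ ⟨ι u, ι v⟩_H with eigenvalue μ = ‖ι û‖_H^{-1}. -/
/-!
Along the line `t ↦ û + t v`, orthogonality of `ι û` to the `ι eᵢ` gives
`ι (û + t v) - P (ι (û + t v)) = ι û + t w` with `w = ι v - P (ι v)`, and `⟪ι û, w⟫ = ⟪ι û, ι v⟫`.
Since `ι û ≠ 0`, the norm is differentiable there, so `t ↦ f (û + t v)` has derivative
`⟪û, v⟫ - ⟪ι û, ι v⟫ / ‖ι û‖` at `0`; criticality says this derivative vanishes.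
-/

open scoped RealInnerProductSpace
open Filter Topology

section Calculus

variable {F : Type*} [NormedAddCommGroup F] [InnerProductSpace ℝ F]

theorem HasDerivAt.norm {f : ℝ → F} {f' : F} {x : ℝ} (hf : HasDerivAt f f' x)
    (h0 : f x ≠ 0) : HasDerivAt (fun y => ‖f y‖) (⟪f x, f'⟫ / ‖f x‖) x := by
  have hsqrt := hf.norm_sq.sqrt (pow_ne_zero 2 (norm_ne_zero_iff.2 h0))
  simp only [Real.sqrt_sq (norm_nonneg _)] at hsqrt
  convert hsqrt using 1
  ring

theorem hasDerivAt_half_norm_sq_add_smul (u v : F) :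
    HasDerivAt (fun t : ℝ => 1 / 2 * ‖u + t • v‖ ^ 2) ⟪u, v⟫ 0 := by
  have hline : HasDerivAt (fun t : ℝ => u + t • v) v 0 := by
    simpa using ((hasDerivAt_id (0 : ℝ)).smul_const v).const_add u
  simpa using hline.norm_sq.const_mul (1 / 2 : ℝ)

theorem hasDerivAt_norm_add_smul {a : F} (ha : a ≠ 0) (w : F) :
    HasDerivAt (fun t : ℝ => ‖a + t • w‖) (⟪a, w⟫ / ‖a‖) 0 := by
  have hline : HasDerivAt (fun t : ℝ => a + t • w) w 0 := by
    simpa using ((hasDerivAt_id (0 : ℝ)).smul_const w).const_add a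
  simpa using hline.norm (by simpa using ha)

end Calculus

theorem HasDerivAt.eq_of_tendsto_div {φ : ℝ → ℝ} {φ' L : ℝ} (h : HasDerivAt φ φ' 0)
    (hL : Tendsto (fun t => (φ t - φ 0) / t) (𝓝[≠] 0) (𝓝 L)) : φ' = L := by
  refine tendsto_nhds_unique (hasDerivAt_iff_tendsto_slope.1 h) ?_
  convert hL using 2 with t
  simp [slope_def_field]

section Projection

variable {F κ : Type*} [NormedAddCommGroup F] [InnerProductSpace ℝ F]
  (s : Finset κ) (x : κ → F) {a : F}

theorem add_smul_sub_sum_inner_smul_of_inner_eq_zero (ha : ∀ i ∈ s, ⟪a, x i⟫ = 0)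
    (b : F) (t : ℝ) :
    a + t • b - ∑ i ∈ s, ⟪a + t • b, x i⟫ • x i
      = a + t • (b - ∑ i ∈ s, ⟪b, x i⟫ • x i) := by
  have hsum : ∑ i ∈ s, ⟪a + t • b, x i⟫ • x i = t • ∑ i ∈ s, ⟪b, x i⟫ • x i := by
    rw [Finset.smul_sum]
    refine Finset.sum_congr rfl fun i hi => ?_
    rw [inner_add_left, real_inner_smul_left, ha i hi, zero_add, smul_smul]
  rw [hsum]
  module

theorem inner_sub_sum_inner_smul_of_inner_eq_zero (ha : ∀ i ∈ s, ⟪a, x i⟫ = 0) (b : F) :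
    ⟪a, b - ∑ i ∈ s, ⟪b, x i⟫ • x i⟫ = ⟪a, b⟫ := by
  rw [inner_sub_right, inner_sum, Finset.sum_eq_zero fun i hi => by
    rw [real_inner_smul_right, ha i hi, mul_zero], sub_zero]

end Projection

theorem stmt_11_general {X H : Type*}
    [NormedAddCommGroup X] [InnerProductSpace ℝ X]
    [NormedAddCommGroup H] [InnerProductSpace ℝ H]
    (ι : X →L[ℝ] H) (hinj : Function.Injective ι)
    (M : ℕ) (e : Fin M → X)
    (P : H → H) (hP : ∀ h : H, P h = ∑ i : Fin M, ⟪h, ι (e i)⟫ • ι (e i))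
    (f : X → ℝ) (hf : ∀ u : X, f u = (1 / 2) * ‖u‖ ^ 2 - ‖ι u - P (ι u)‖)
    (uhat : X) (hne : uhat ≠ 0) (hperp : ∀ i : Fin M, ⟪ι uhat, ι (e i)⟫ = 0)
    (hcrit : ∀ v : X,
      Tendsto (fun t : ℝ => (f (uhat + t • v) - f uhat) / t) (nhdsWithin 0 {0}ᶜ)
        (nhds 0)) :
    ∀ v : X, ⟪uhat, v⟫ = ‖ι uhat‖⁻¹ * ⟪ι uhat, ι v⟫ := by
  intro v
  have hperp' : ∀ i ∈ Finset.univ, ⟪ι uhat, ι (e i)⟫ = 0 := fun i _ => hperp i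
  have ha : ι uhat ≠ 0 := (map_ne_zero_iff ι hinj).2 hne
  have hline : (fun t : ℝ => f (uhat + t • v))
      = fun t => 1 / 2 * ‖uhat + t • v‖ ^ 2 - ‖ι uhat + t • (ι v - P (ι v))‖ := by
    funext t
    simp only [hf, map_add, map_smul, hP,
      add_smul_sub_sum_inner_smul_of_inner_eq_zero _ _ hperp']
  have hderiv : HasDerivAt (fun t : ℝ => f (uhat + t • v))
      (⟪uhat, v⟫ - ⟪ι uhat, ι v - P (ι v)⟫ / ‖ι uhat‖) 0 := by
    rw [hline]
    exact (hasDerivAt_half_norm_sq_add_smul uhat v).sub (hasDerivAt_norm_add_smul ha _)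
  have hzero := hderiv.eq_of_tendsto_div (by simpa using hcrit v)
  simp only [hP, inner_sub_sum_inner_smul_of_inner_eq_zero _ _ hperp'] at hzero
  rw [← div_eq_inv_mul]
  linarith

/-- Critical points of the Auchmuty-type functional
`f(u) = (1/2)‖u‖² − ‖ι u − P(ι u)‖`, where `P h = Σ_{i<M} ⟪h, ι e_i⟫ ι e_i` and the
`ι e_i` are orthonormal in `H`, that are `H`-orthogonal to the `ι e_i` and nonzero, are
eigenvectors of the variational problem `⟪u, v⟫_X = μ ⟪ι u, ι v⟫_H` with
`μ = ‖ι uhat‖⁻¹`. -/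
theorem stmt_11 {X H : Type*}
    [NormedAddCommGroup X] [InnerProductSpace ℝ X] [CompleteSpace X]
    [NormedAddCommGroup H] [InnerProductSpace ℝ H] [CompleteSpace H]
    (ι : X →L[ℝ] H) (hinj : Function.Injective ι) (hcomp : IsCompactOperator ι)
    (M : ℕ) (e : Fin M → X)
    (horth : ∀ i j : Fin M, ⟪ι (e i), ι (e j)⟫ = if i = j then (1 : ℝ) else 0)
    (P : H → H) (hP : ∀ h : H, P h = ∑ i : Fin M, ⟪h, ι (e i)⟫ • ι (e i))
    (f : X → ℝ) (hf : ∀ u : X, f u = (1 / 2) * ‖u‖ ^ 2 - ‖ι u - P (ι u)‖)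
    (uhat : X) (hne : uhat ≠ 0) (hperp : ∀ i : Fin M, ⟪ι uhat, ι (e i)⟫ = 0)
    (hcrit : ∀ v : X,
      Tendsto (fun t : ℝ => (f (uhat + t • v) - f uhat) / t) (nhdsWithin 0 {0}ᶜ)
        (nhds 0)) :
    ∀ v : X, ⟪uhat, v⟫ = ‖ι uhat‖⁻¹ * ⟪ι uhat, ι v⟫ :=
  stmt_11_general ι hinj M e P hP f hf uhat hne hperp hcrit
end

section
/- Let X and H be real Hilbert spaces and let ι : X → H be an injective continuous linear map. Let (e_j)_{j≥1} be a sequence in X and (μ_j)_{j≥1} a nondecreasing sequence of real numbers with μ_j ≥ 1, such that: (a) ⟨ι e_i, ι e_j⟩_H = δ_{ij} for all i,j; (b) ⟨e_j, v⟩_X = μ_j ⟨ι e_j, ι v⟩_H for all v ∈ X and all j; (c) the linear span of {e_j : j ≥ 1} is dense in X; (d) the linear span of {ι e_j : j ≥ 1} is dense in H. Fix M ∈ ℕ, define P : H → H by P h = Σ_{i=1}^M ⟨h, ι e_i⟩_H ι e_i and f : X → ℝ by f(u) = (1/2)‖u‖_X² − ‖ι u − P(ι u)‖_H. Then f(u)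 ≥ −1/(2 μ_{M+1}) for every u ∈ X, and equality holds at u = ± μ_{M+1}^{-1} e_{M+1}; in particular min_{u ∈ X} f(u) = −1/(2 μ_{M+1}). -/
open scoped RealInnerProductSpace

/-!
With `a j = ⟪ι (e j), ι u⟫`, condition (b) gives `⟪e j, u⟫ = μ j * a j` and `‖e j‖ ^ 2 = μ j`, so
Parseval for the orthogonal basis `e` of `X` and the orthonormal basis `ι ∘ e` of `H` yields
`‖u‖ ^ 2 = ∑ μ j * a j ^ 2` and `‖ι u - P (ι u)‖ ^ 2 = ∑_{j ≥ M} a j ^ 2 ≤ ‖u‖ ^ 2 / μ M`.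
Completing the square in `s = ‖ι u - P (ι u)‖` then gives `f u ≥ μ M * s ^ 2 / 2 - s ≥ -1 / (2 μ M)`,
and both inequalities are equalities at `u = ± (μ M)⁻¹ • e M`, where `s = 1 / μ M`.
-/

theorem orthonormal_inv_norm_smul {κ E : Type*} [NormedAddCommGroup E] [InnerProductSpace ℝ E]
    {v : κ → E} (hv : Pairwise fun i j => ⟪v i, v j⟫ = 0) (hv0 : ∀ i, v i ≠ 0) :
    Orthonormal ℝ fun i => ‖v i‖⁻¹ • v i :=
  ⟨fun i => norm_smul_inv_norm (hv0 i), fun i j hij => by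
    simp only [real_inner_smul_left, real_inner_smul_right, hv hij, mul_zero]⟩

theorem hasSum_inner_sq_div_norm_sq {κ E : Type*} [NormedAddCommGroup E]
    [InnerProductSpace ℝ E] [CompleteSpace E] {v : κ → E}
    (hv : Pairwise fun i j => ⟪v i, v j⟫ = 0) (hv0 : ∀ i, v i ≠ 0)
    (hdense : Dense (Submodule.span ℝ (Set.range v) : Set E)) (x : E) :
    HasSum (fun i => ⟪v i, x⟫ ^ 2 / ‖v i‖ ^ 2) (‖x‖ ^ 2) := by
  have hsp : ⊤ ≤ (Submodule.span ℝ (Set.range fun i => ‖v i‖⁻¹ • v i)).topologicalClosure := by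
    rw [← Submodule.dense_iff_topologicalClosure_eq_top.mp hdense]
    refine Submodule.topologicalClosure_mono (Submodule.span_le.mpr ?_)
    rintro - ⟨i, rfl⟩
    have hvi : v i = ‖v i‖ • ‖v i‖⁻¹ • v i := by
      rw [smul_smul, mul_inv_cancel₀ (norm_ne_zero_iff.mpr (hv0 i)), one_smul]
    rw [hvi]
    exact Submodule.smul_mem _ _ (Submodule.subset_span ⟨i, rfl⟩)
  have hterm : ∀ i, ⟪x, ‖v i‖⁻¹ • v i⟫ * ⟪‖v i‖⁻¹ • v i, x⟫ = ⟪v i, x⟫ ^ 2 / ‖v i‖ ^ 2 := by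
    intro i
    rw [real_inner_smul_left, real_inner_smul_right, real_inner_comm x]
    field_simp
  simpa only [HilbertBasis.coe_mk, hterm, real_inner_self_eq_norm_sq] using
    (HilbertBasis.mk (orthonormal_inv_norm_smul hv hv0) hsp).hasSum_inner_mul_inner x x

theorem HilbertBasis.hasSum_sq_inner_sub_sum {κ H : Type*} [DecidableEq κ] [NormedAddCommGroup H]
    [InnerProductSpace ℝ H] (b : HilbertBasis κ ℝ H) (s : Finset κ) (h : H) :
    HasSum (fun j => if j ∈ s then 0 else ⟪b j, h⟫ ^ 2)
      (‖h - ∑ i ∈ s, ⟪h, b i⟫ • b i‖ ^ 2) := by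
  have hcoeff : ∀ j, ⟪b j, h - ∑ i ∈ s, ⟪h, b i⟫ • b i⟫ = if j ∈ s then 0 else ⟪b j, h⟫ := by
    intro j
    simp only [inner_sub_right, inner_sum, real_inner_smul_right,
      orthonormal_iff_ite.mp b.orthonormal, mul_ite, mul_one, mul_zero, Finset.sum_ite_eq]
    split_ifs <;> simp [real_inner_comm]
  have hterm : ∀ j, ⟪h - ∑ i ∈ s, ⟪h, b i⟫ • b i, b j⟫ * ⟪b j, h - ∑ i ∈ s, ⟪h, b i⟫ • b i⟫ =
      if j ∈ s then 0 else ⟪b j, h⟫ ^ 2 := by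
    intro j
    rw [real_inner_comm, hcoeff]
    split_ifs <;> ring
  simpa only [hterm, real_inner_self_eq_norm_sq] using b.hasSum_inner_mul_inner
    (h - ∑ i ∈ s, ⟪h, b i⟫ • b i) (h - ∑ i ∈ s, ⟪h, b i⟫ • b i)

theorem neg_inv_two_mul_le_half_sq_sub {m s t : ℝ} (hm : 0 < m) (h : m * s ^ 2 ≤ t ^ 2) :
    -(1 / (2 * m)) ≤ 1 / 2 * t ^ 2 - s := by
  have hsq : 0 ≤ (m * s - 1) ^ 2 / (2 * m) := by positivity
  have hexpand : (m * s - 1) ^ 2 / (2 * m) = m * s ^ 2 / 2 - s + 1 / (2 * m) := by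
    field_simp
    ring
  linarith

section Eigenvectors

variable {X H : Type*} [NormedAddCommGroup X] [InnerProductSpace ℝ X]
  [NormedAddCommGroup H] [InnerProductSpace ℝ H] {ι : X →L[ℝ] H} {e : ℕ → X} {μ : ℕ → ℝ}

theorem eigenvalue_eq_norm_sq (ho : Orthonormal ℝ fun j => ι (e j))
    (heig : ∀ (j : ℕ) (v : X), ⟪e j, v⟫ = μ j * ⟪ι (e j), ι v⟫) (j : ℕ) :
    μ j = ‖e j‖ ^ 2 := by
  have := heig j (e j)
  rwa [real_inner_self_eq_norm_sq, real_inner_self_eq_norm_sq, ho.1 j, one_pow, mul_one,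
    eq_comm] at this

theorem eigenvector_ne_zero (ho : Orthonormal ℝ fun j => ι (e j)) (j : ℕ) : e j ≠ 0 :=
  fun h => ho.ne_zero j (by rw [h, map_zero])

theorem eigenvalue_pos (ho : Orthonormal ℝ fun j => ι (e j))
    (heig : ∀ (j : ℕ) (v : X), ⟪e j, v⟫ = μ j * ⟪ι (e j), ι v⟫) (j : ℕ) : 0 < μ j := by
  rw [eigenvalue_eq_norm_sq ho heig]
  exact pow_pos (norm_pos_iff.mpr (eigenvector_ne_zero ho j)) 2

theorem hasSum_eigenvalue_mul_sq_inner [CompleteSpace X] (ho : Orthonormal ℝ fun j => ι (e j))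
    (heig : ∀ (j : ℕ) (v : X), ⟪e j, v⟫ = μ j * ⟪ι (e j), ι v⟫)
    (hdense : Dense (Submodule.span ℝ (Set.range e) : Set X)) (u : X) :
    HasSum (fun j => μ j * ⟪ι (e j), ι u⟫ ^ 2) (‖u‖ ^ 2) := by
  have horth : Pairwise fun i j => ⟪e i, e j⟫ = 0 := fun i j hij => by
    simp only [heig, ho.2 hij, mul_zero]
  have hterm : ∀ j, ⟪e j, u⟫ ^ 2 / ‖e j‖ ^ 2 = μ j * ⟪ι (e j), ι u⟫ ^ 2 := by
    intro j
    rw [heig, ← eigenvalue_eq_norm_sq ho heig]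
    field_simp [(eigenvalue_pos ho heig j).ne']
  simpa only [hterm] using
    hasSum_inner_sq_div_norm_sq horth (eigenvector_ne_zero ho) hdense u

theorem eigenvalue_mul_sq_norm_sub_sum_le [CompleteSpace X] [CompleteSpace H]
    (ho : Orthonormal ℝ fun j => ι (e j))
    (heig : ∀ (j : ℕ) (v : X), ⟪e j, v⟫ = μ j * ⟪ι (e j), ι v⟫) (hmono : Monotone μ)
    (hdenseX : Dense (Submodule.span ℝ (Set.range e) : Set X))
    (hdenseH : Dense (Submodule.span ℝ (Set.range fun j => ι (e j)) : Set H)) (M : ℕ) (u : X) :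
    μ M * ‖ι u - ∑ i ∈ Finset.range M, ⟪ι u, ι (e i)⟫ • ι (e i)‖ ^ 2 ≤ ‖u‖ ^ 2 := by
  let b := HilbertBasis.mk ho (Submodule.dense_iff_topologicalClosure_eq_top.mp hdenseH).ge
  have hb : ⇑b = fun j => ι (e j) := HilbertBasis.coe_mk ho _
  have hH := (b.hasSum_sq_inner_sub_sum (Finset.range M) (ι u)).mul_left (μ M)
  rw [hb] at hH
  refine hasSum_le (fun j => ?_) hH (hasSum_eigenvalue_mul_sq_inner ho heig hdenseX u)
  split_ifs with hj
  · rw [mul_zero]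
    exact mul_nonneg (eigenvalue_pos ho heig j).le (sq_nonneg _)
  · exact mul_le_mul_of_nonneg_right (hmono (not_lt.mp (Finset.mem_range.not.mp hj)))
      (sq_nonneg _)

theorem sub_sum_smul_eigenvector (ho : Orthonormal ℝ fun j => ι (e j)) (M : ℕ) (c : ℝ) :
    ι (c • e M) - ∑ i ∈ Finset.range M, ⟪ι (c • e M), ι (e i)⟫ • ι (e i) = c • ι (e M) := by
  rw [Finset.sum_eq_zero fun i hi => ?_, sub_zero, map_smul]
  rw [map_smul, real_inner_smul_left, ho.2 (Finset.mem_range.mp hi).ne', mul_zero, zero_smul]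

theorem norm_sq_smul_eigenvector (ho : Orthonormal ℝ fun j => ι (e j))
    (heig : ∀ (j : ℕ) (v : X), ⟪e j, v⟫ = μ j * ⟪ι (e j), ι v⟫) (M : ℕ) (c : ℝ) :
    ‖c • e M‖ ^ 2 = c ^ 2 * μ M := by
  rw [norm_smul, mul_pow, Real.norm_eq_abs, sq_abs, eigenvalue_eq_norm_sq ho heig]

end Eigenvectors

theorem stmt_12_general {X H : Type*}
    [NormedAddCommGroup X] [InnerProductSpace ℝ X] [CompleteSpace X]
    [NormedAddCommGroup H] [InnerProductSpace ℝ H] [CompleteSpace H]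
    (ι : X →L[ℝ] H)
    (e : ℕ → X) (μ : ℕ → ℝ) (hmono : Monotone μ)
    (horth : ∀ i j : ℕ, ⟪ι (e i), ι (e j)⟫ = if i = j then (1 : ℝ) else 0)
    (heig : ∀ (j : ℕ) (v : X), ⟪e j, v⟫ = μ j * ⟪ι (e j), ι v⟫)
    (hdenseX : Dense ((Submodule.span ℝ (Set.range e) : Submodule ℝ X) : Set X))
    (hdenseH : Dense ((Submodule.span ℝ (Set.range fun j => ι (e j)) :
      Submodule ℝ H) : Set H))
    (M : ℕ) (P : H → H)
    (hP : ∀ h : H, P h = ∑ i ∈ Finset.range M, ⟪h, ι (e i)⟫ • ι (e i))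
    (f : X → ℝ) (hf : ∀ u : X, f u = (1 / 2) * ‖u‖ ^ 2 - ‖ι u - P (ι u)‖) :
    (∀ u : X, -(1 / (2 * μ M)) ≤ f u) ∧
      f ((μ M)⁻¹ • e M) = -(1 / (2 * μ M)) ∧
      f (-((μ M)⁻¹ • e M)) = -(1 / (2 * μ M)) := by
  have ho : Orthonormal ℝ fun j => ι (e j) := orthonormal_iff_ite.mpr horth
  have hμM := eigenvalue_pos ho heig M
  have hf_smul (c : ℝ) : f (c • e M) = 1 / 2 * (c ^ 2 * μ M) - |c| := by
    rw [hf, hP, sub_sum_smul_eigenvector ho, norm_sq_smul_eigenvector ho heig, norm_smul,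
      ho.1 M, mul_one, Real.norm_eq_abs]
  refine ⟨fun u => ?_, ?_, ?_⟩
  · rw [hf, hP]
    exact neg_inv_two_mul_le_half_sq_sub hμM
      (eigenvalue_mul_sq_norm_sub_sum_le ho heig hmono hdenseX hdenseH M u)
  · rw [hf_smul, abs_of_pos (inv_pos.mpr hμM)]
    field_simp
    ring
  · rw [← neg_smul, hf_smul, abs_neg, abs_of_pos (inv_pos.mpr hμM)]
    field_simp
    ring

/-- abstract Auchmuty Principle: let `ι : X → H` be an injective
continuous linear map between real Hilbert spaces, `(e j)_{j∈ℕ}` a sequence in `X` and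
`(μ j)_{j∈ℕ}` a nondecreasing sequence of reals with `μ j ≥ 1` such that the `ι (e j)`
are orthonormal in `H`, each `e j` is an eigenvector of the variational problem
`⟪u, v⟫_X = μ ⟪ι u, ι v⟫_H` with eigenvalue `μ j`, the span of the `e j` is dense in `X`
and the span of the `ι (e j)` is dense in `H`. With
`P h = Σ_{i<M} ⟪h, ι e_i⟫ ι e_i` and `f(u) = (1/2)‖u‖² − ‖ι u − P(ι u)‖`, one has
`f(u) ≥ −1/(2 μ_{M+1})` for all `u`, with equality at `u = ± μ_{M+1}⁻¹ • e_{M+1}`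
(here `e 0, e 1, …` enumerate `e_1, e_2, …`, so `e_{M+1}` is `e M`). -/
theorem stmt_12 {X H : Type*}
    [NormedAddCommGroup X] [InnerProductSpace ℝ X] [CompleteSpace X]
    [NormedAddCommGroup H] [InnerProductSpace ℝ H] [CompleteSpace H]
    (ι : X →L[ℝ] H) (hinj : Function.Injective ι)
    (e : ℕ → X) (μ : ℕ → ℝ) (hmono : Monotone μ) (hμ : ∀ j, 1 ≤ μ j)
    (horth : ∀ i j : ℕ, ⟪ι (e i), ι (e j)⟫ = if i = j then (1 : ℝ) else 0)
    (heig : ∀ (j : ℕ) (v : X), ⟪e j, v⟫ = μ j * ⟪ι (e j), ι v⟫)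
    (hdenseX : Dense ((Submodule.span ℝ (Set.range e) : Submodule ℝ X) : Set X))
    (hdenseH : Dense ((Submodule.span ℝ (Set.range fun j => ι (e j)) :
      Submodule ℝ H) : Set H))
    (M : ℕ) (P : H → H)
    (hP : ∀ h : H, P h = ∑ i ∈ Finset.range M, ⟪h, ι (e i)⟫ • ι (e i))
    (f : X → ℝ) (hf : ∀ u : X, f u = (1 / 2) * ‖u‖ ^ 2 - ‖ι u - P (ι u)‖) :
    (∀ u : X, -(1 / (2 * μ M)) ≤ f u) ∧
      f ((μ M)⁻¹ • e M) = -(1 / (2 * μ M)) ∧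
      f (-((μ M)⁻¹ • e M)) = -(1 / (2 * μ M)) :=
  stmt_12_general ι e μ hmono horth heig hdenseX hdenseH M P hP f hf
end

section
/- Let X and H be real Hilbert spaces and let ι : X → H be a continuous linear map. Let M ∈ ℕ, let e_1, …, e_M ∈ X and μ_1, …, μ_M ∈ ℝ be such that ⟨ι e_i, ι e_j⟩_H = δ_{ij} and ⟨e_i, v⟩_X = μ_i ⟨ι e_i, ι v⟩_H for all v ∈ X and all i,j = 1,…,M. Define P : H → H by P h = Σ_{i=1}^M ⟨h, ι e_i⟩_H ι e_i and f : X → ℝ by f(u) = (1/2)‖u‖_X² − ‖ι u − P(ι u)‖_H. Then for every u ∈ X, setting w = u − Σ_{i=1}^M ⟨ι u, ι e_i⟩_H e_i, one has f(u) ≥ f(w). -/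
/-! The vector `w` is `u` with its components along the `e i` removed. On the `H` side this is exactly
the projection residual `ι u - P (ι u)`, which is orthogonal to every `ι (e i)`; hence the second
term of `f` is the same at `u` and at `w`. The eigenvector relation transports this orthogonality
back to `X`: `⟪e i, w⟫ = μ i * ⟪ι (e i), ι w⟫ = 0`, so `u = w + ∑ cᵢ • e i` is an orthogonal
decomposition and `‖w‖ ≤ ‖u‖` by Pythagoras. -/

open scoped RealInnerProductSpace

theorem Orthonormal.inner_sub_sum_inner_smul_eq_zero {κ E : Type*} [Fintype κ]
    [NormedAddCommGroup E] [InnerProductSpace ℝ E] {v : κ → E} (hv : Orthonormal ℝ v)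
    (x : E) (j : κ) : ⟪x - ∑ i, ⟪x, v i⟫ • v i, v j⟫ = 0 := by
  rw [inner_sub_left, hv.inner_left_fintype, conj_trivial, sub_self]

theorem norm_le_norm_add_of_inner_eq_zero {F : Type*} [NormedAddCommGroup F]
    [InnerProductSpace ℝ F] {x y : F} (h : ⟪x, y⟫ = 0) : ‖x‖ ≤ ‖x + y‖ := by
  rw [mul_self_le_mul_self_iff (norm_nonneg _) (norm_nonneg _),
    norm_add_sq_eq_norm_sq_add_norm_sq_real h]
  exact le_add_of_nonneg_right (mul_self_nonneg _)

theorem inner_sum_smul_eq_zero_of_inner_map_eq_zero {κ X H : Type*} [Fintype κ]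
    [NormedAddCommGroup X] [InnerProductSpace ℝ X] [NormedAddCommGroup H] [InnerProductSpace ℝ H]
    (ι : X →ₗ[ℝ] H) {e : κ → X} {μ : κ → ℝ} (heig : ∀ i v, ⟪e i, v⟫ = μ i * ⟪ι (e i), ι v⟫)
    {w : X} (hw : ∀ i, ⟪ι w, ι (e i)⟫ = 0) (c : κ → ℝ) : ⟪w, ∑ i, c i • e i⟫ = 0 := by
  refine (inner_sum _ _ _).trans (Finset.sum_eq_zero fun i _ => ?_)
  rw [real_inner_smul_right, real_inner_comm, heig, real_inner_comm, hw, mul_zero, mul_zero]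

theorem stmt_14_general {X H : Type*}
    [NormedAddCommGroup X] [InnerProductSpace ℝ X]
    [NormedAddCommGroup H] [InnerProductSpace ℝ H]
    (ι : X →L[ℝ] H) (M : ℕ) (e : Fin M → X) (μ : Fin M → ℝ)
    (horth : ∀ i j : Fin M, ⟪ι (e i), ι (e j)⟫ = if i = j then (1 : ℝ) else 0)
    (heig : ∀ (i : Fin M) (v : X), ⟪e i, v⟫ = μ i * ⟪ι (e i), ι v⟫)
    (P : H → H) (hP : ∀ h : H, P h = ∑ i : Fin M, ⟪h, ι (e i)⟫ • ι (e i))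
    (f : X → ℝ) (hf : ∀ u : X, f u = (1 / 2) * ‖u‖ ^ 2 - ‖ι u - P (ι u)‖)
    (u : X) (w : X) (hw : w = u - ∑ i : Fin M, ⟪ι u, ι (e i)⟫ • e i) :
    f w ≤ f u := by
  have hv : Orthonormal ℝ fun i => ι (e i) := orthonormal_iff_ite.mpr horth
  have hιw : ι w = ι u - P (ι u) := by simp [hw, hP, map_sum, map_smul]
  have hιw_perp : ∀ i, ⟪ι w, ι (e i)⟫ = 0 := by
    simpa only [hιw, hP] using hv.inner_sub_sum_inner_smul_eq_zero (ι u)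
  have hPw : P (ι w) = 0 := by simp [hP, hιw_perp]
  have hnorm : ‖w‖ ≤ ‖u‖ :=
    calc ‖w‖ ≤ ‖w + ∑ i, ⟪ι u, ι (e i)⟫ • e i‖ :=
          norm_le_norm_add_of_inner_eq_zero
            (inner_sum_smul_eq_zero_of_inner_map_eq_zero ι.toLinearMap heig hιw_perp _)
      _ = ‖u‖ := by rw [hw, sub_add_cancel]
  rw [hf, hf, hPw, sub_zero, ← hιw]
  gcongr

/-- Let `e_1, …, e_M ∈ X` be eigenvectors of the variational problem
`⟪u, v⟫_X = μ ⟪ι u, ι v⟫_H` (with eigenvalues `μ_i`) whose images `ι e_i` are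
orthonormal in `H`. With `P h = Σ_i ⟪h, ι e_i⟫ ι e_i` and
`f(u) = (1/2)‖u‖² − ‖ι u − P(ι u)‖`, for every `u ∈ X` and
`w = u − Σ_i ⟪ι u, ι e_i⟫ e_i` one has `f(u) ≥ f(w)`. -/
theorem stmt_14 {X H : Type*}
    [NormedAddCommGroup X] [InnerProductSpace ℝ X] [CompleteSpace X]
    [NormedAddCommGroup H] [InnerProductSpace ℝ H] [CompleteSpace H]
    (ι : X →L[ℝ] H) (M : ℕ) (e : Fin M → X) (μ : Fin M → ℝ)
    (horth : ∀ i j : Fin M, ⟪ι (e i), ι (e j)⟫ = if i = j then (1 : ℝ) else 0)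
    (heig : ∀ (i : Fin M) (v : X), ⟪e i, v⟫ = μ i * ⟪ι (e i), ι v⟫)
    (P : H → H) (hP : ∀ h : H, P h = ∑ i : Fin M, ⟪h, ι (e i)⟫ • ι (e i))
    (f : X → ℝ) (hf : ∀ u : X, f u = (1 / 2) * ‖u‖ ^ 2 - ‖ι u - P (ι u)‖)
    (u : X) (w : X) (hw : w = u - ∑ i : Fin M, ⟪ι u, ι (e i)⟫ • e i) :
    f w ≤ f u :=
  stmt_14_general ι M e μ horth heig P hP f hf u w hw
end
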